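/- arXiv:cs/0703099 — 3 statements merged into one kernel-verified Lean document; each statement's English description precedes it below -/
import Mathlib

section
/- Strict feasibility implies upper semicontinuity of the optimal solution set in the constraint data: let K be a finite set, fix linear equality constraints E z = 0 on the simplex Δ(K), and consider cost vectors (c₀, c₁, …, c_B) ∈ (ℝ^K)^{B+1} and bounds V ∈ ℝ^B varying continuously with a parameter u in a compact metric space U. Suppose for every u ∈ U there exists z feasible with ⟨c_j(u), z⟩ ≤ V_j − η for all j = 1,…,B and some fixed η > 0, and that each cost map u ↦ c_j(u) is continuous. Then the map u ↦ Γ(u), sending u to the set of minimizers of ⟨c₀(u), ·⟩ over the feasible set {z ∈ Δ(K) : E z = 0, ⟨c_j(u), z⟩ ≤ V_j for all j}, is upper semicontinuous with nonempty compact convex values. -/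
/-!
The feasible sets form a lower hemicontinuous correspondence with closed graph: a feasible point
is the limit of points on the segment towards a Slater point, these are strictly feasible, and
strict feasibility survives small perturbations of the constraint costs. Berge's maximum theorem
then gives the correspondence of minimizers a closed graph, and a closed-graph correspondence with
values in the compact simplex is upper hemicontinuous.
-/

open Filter Topology Set

def minimizers {X α : Type*} [Preorder α] (s : Set X) (f : X → α) : Set X :=
  {z ∈ s | ∀ w ∈ s, f z ≤ f w}

theorem ConvexOn.convex_minimizers {𝕜 E β : Type*} [Semiring 𝕜] [PartialOrder 𝕜]
    [AddCommMonoid E] [SMul 𝕜 E] [AddCommMonoid β] [PartialOrder β] [IsOrderedAddMonoid β]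
    [Module 𝕜 β] [PosSMulMono 𝕜 β] {s : Set E} {f : E → β} (hf : ConvexOn 𝕜 s f) :
    Convex 𝕜 (minimizers s f) := by
  have hset : minimizers s f = s ∩ ⋂ w ∈ s, {z ∈ s | f z ≤ f w} := by
    ext z
    simp only [minimizers, mem_ofPred_eq, mem_inter_iff, mem_iInter]
    exact ⟨fun h => ⟨h.1, fun w hw => ⟨h.1, h.2 w hw⟩⟩, fun h => ⟨h.1, fun w hw => (h.2 w hw).2⟩⟩
  rw [hset]
  exact hf.1.inter (convex_iInter₂ fun w _ => hf.convex_le (f w))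

section Berge

variable {X α : Type*} [TopologicalSpace X] [LinearOrder α] [TopologicalSpace α]

theorem IsCompact.nonempty_minimizers [ClosedIicTopology α] {s : Set X} {f : X → α}
    (hs : IsCompact s) (hne : s.Nonempty) (hf : ContinuousOn f s) : (minimizers s f).Nonempty :=
  let ⟨z, hz, hmin⟩ := hs.exists_isMinOn hne hf
  ⟨z, hz, fun _ hw => hmin hw⟩

variable [OrderClosedTopology α]

theorem IsCompact.isCompact_minimizers {s : Set X} {f : X → α} (hs : IsCompact s)
    (hf : Continuous f) : IsCompact (minimizers s f) := by
  have hset : minimizers s f = s ∩ ⋂ w ∈ s, {z | f z ≤ f w} := by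
    ext z
    simp only [minimizers, mem_ofPred_eq, mem_inter_iff, mem_iInter]
  rw [hset]
  exact hs.inter_right (isClosed_biInter fun w _ => isClosed_le hf continuous_const)

variable {U : Type*} [TopologicalSpace U] {F : U → Set X} {f : U → X → α}

theorem isClosed_graph_minimizers (hf : Continuous (Function.uncurry f))
    (hF : IsClosed {p : U × X | p.2 ∈ F p.1}) (hFl : LowerHemicontinuous F) :
    IsClosed {p : U × X | p.2 ∈ minimizers (F p.1) (f p.1)} := by
  refine isClosed_iff_frequently.2 fun ⟨u, z⟩ hfreq =>
    ⟨isClosed_iff_frequently.1 hF (u, z) (hfreq.mono fun _ hp => hp.1), fun w hw => ?_⟩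
  by_contra! hlt
  have hopen : IsOpen {q : (U × X) × X | f q.1.1 q.2 < f q.1.1 q.1.2} :=
    isOpen_lt (hf.comp (continuous_fst.fst.prodMk continuous_snd)) (hf.comp continuous_fst)
  obtain ⟨N, hN, W, hW, hNW⟩ := mem_nhds_prod_iff.1 (hopen.mem_nhds hlt)
  obtain ⟨W', hW'W, hW'o, hwW'⟩ := mem_nhds_iff.1 hW
  have hlower : ∀ᶠ p in 𝓝 (u, z), (F p.1 ∩ W').Nonempty :=
    (continuous_fst.tendsto (u, z)).eventually
      (lowerHemicontinuousAt_iff.1 (lowerHemicontinuous_iff.1 hFl u) W' hW'o ⟨w, hw, hwW'⟩)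
  obtain ⟨p, ⟨-, hpmin⟩, hpN, w', hw'F, hw'W⟩ :=
    (hfreq.and_eventually ((eventually_mem_set.2 hN).and hlower)).exists
  exact (hpmin w' hw'F).not_gt (hNW (mk_mem_prod hpN (hW'W hw'W)))

/-- The tube lemma around the compact set `S \ O` keeps the closed graph away from it. -/
theorem upperHemicontinuous_of_isClosed_graph {Γ : U → Set X} {S : Set X} (hS : IsCompact S)
    (hΓS : ∀ u, Γ u ⊆ S) (hΓ : IsClosed {p : U × X | p.2 ∈ Γ p.1}) :
    UpperHemicontinuous Γ := by
  refine .of_forall_isOpen fun u O hO huO => ?_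
  have hout : ∀ z ∈ S \ O, ∀ᶠ p in 𝓝 (u, z), p.2 ∉ Γ p.1 := fun z hz =>
    hΓ.isOpen_compl.mem_nhds fun hzu => hz.2 (huO hzu)
  filter_upwards [(hS.diff hO).eventually_forall_of_forall_eventually
    (P := fun u' z => z ∉ Γ u') hout] with u' hu' z hz
  by_contra hzO
  exact hu' z ⟨hΓS u' hz, hzO⟩ hz

theorem upperHemicontinuous_minimizers {S : Set X} (hS : IsCompact S) (hFS : ∀ u, F u ⊆ S)
    (hf : Continuous (Function.uncurry f)) (hF : IsClosed {p : U × X | p.2 ∈ F p.1})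
    (hFl : LowerHemicontinuous F) : UpperHemicontinuous fun u => minimizers (F u) (f u) :=
  upperHemicontinuous_of_isClosed_graph hS (fun u _ hz => hFS u hz.1)
    (isClosed_graph_minimizers hf hF hFl)

end Berge

section SimplexLP

variable {K ιE ι : Type*} [Fintype K]

def simplexFeasible (e : ιE → K → ℝ) (a : ι → K → ℝ) (V : ι → ℝ) : Set (K → ℝ) :=
  {z | (∀ k, 0 ≤ z k) ∧ (∑ k, z k = 1) ∧ (∀ i, e i ⬝ᵥ z = 0) ∧ ∀ j, a j ⬝ᵥ z ≤ V j}

variable (e : ιE → K → ℝ) (V : ι → ℝ)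

theorem simplexFeasible_subset_stdSimplex (a : ι → K → ℝ) :
    simplexFeasible e a V ⊆ stdSimplex ℝ K :=
  fun _ hz => ⟨hz.1, hz.2.1⟩

theorem convex_simplexFeasible (a : ι → K → ℝ) : Convex ℝ (simplexFeasible e a V) := by
  intro z hz w hw s t hs ht hst
  obtain ⟨hz0, hz1⟩ := convex_stdSimplex ℝ K ⟨hz.1, hz.2.1⟩ ⟨hw.1, hw.2.1⟩ hs ht hst
  refine ⟨hz0, hz1, fun i => ?_, fun j => ?_⟩
  · simp [dotProduct_add, dotProduct_smul, hz.2.2.1 i, hw.2.2.1 i]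
  · simp only [dotProduct_add, dotProduct_smul, smul_eq_mul]
    calc s * a j ⬝ᵥ z + t * a j ⬝ᵥ w ≤ s * V j + t * V j := by
          gcongr
          exacts [hz.2.2.2 j, hw.2.2.2 j]
      _ = V j := by rw [← add_mul, hst, one_mul]

variable {U : Type*} [TopologicalSpace U] {a : U → ι → K → ℝ}

theorem isClosed_graph_simplexFeasible (ha : Continuous a) :
    IsClosed {p : U × (K → ℝ) | p.2 ∈ simplexFeasible e (a p.1) V} := by
  have hdot : ∀ b : U × (K → ℝ) → K → ℝ, Continuous b → Continuous fun p => b p ⬝ᵥ p.2 :=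
    fun b hb => hb.dotProduct continuous_snd
  simp only [simplexFeasible, mem_ofPred_eq]
  simp only [ofPred_and, ofPred_forall]
  exact (isClosed_iInter fun k => isClosed_le continuous_const
      ((continuous_apply k).comp continuous_snd)).inter
    ((isClosed_eq (continuous_finsetSum _ fun k _ => (continuous_apply k).comp continuous_snd)
      continuous_const).inter
    ((isClosed_iInter fun i => isClosed_eq (hdot _ continuous_const) continuous_const).inter
      (isClosed_iInter fun j => isClosed_le (hdot _ ((continuous_apply j).comp
        (ha.comp continuous_fst))) continuous_const)))

theorem eventually_mem_simplexFeasible [Finite ι] (ha : Continuous a) {u : U} {z : K → ℝ}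
    (hz : z ∈ stdSimplex ℝ K) (he : ∀ i, e i ⬝ᵥ z = 0) (hlt : ∀ j, a u j ⬝ᵥ z < V j) :
    ∀ᶠ u' in 𝓝 u, z ∈ simplexFeasible e (a u') V := by
  have hev : ∀ j, ∀ᶠ u' in 𝓝 u, a u' j ⬝ᵥ z < V j := fun j =>
    (((continuous_apply j).comp ha).dotProduct continuous_const).continuousAt.eventually_lt
      continuousAt_const (hlt j)
  filter_upwards [eventually_all.2 hev] with u' hu'
  exact ⟨hz.1, hz.2, he, fun j => (hu' j).le⟩

theorem lowerHemicontinuous_simplexFeasible [Finite ι] (ha : Continuous a)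
    (hslater : ∀ u, ∃ s ∈ stdSimplex ℝ K, (∀ i, e i ⬝ᵥ s = 0) ∧ ∀ j, a u j ⬝ᵥ s < V j) :
    LowerHemicontinuous fun u => simplexFeasible e (a u) V := by
  refine lowerHemicontinuous_iff.2 fun u => lowerHemicontinuousAt_iff.2 ?_
  rintro W hW ⟨w, hw, hwW⟩
  obtain ⟨s, hs, hse, hsa⟩ := hslater u
  have hsF : s ∈ simplexFeasible e (a u) V := ⟨hs.1, hs.2, hse, fun j => (hsa j).le⟩
  have hpath : Tendsto (fun t : ℝ => (1 - t) • w + t • s) (𝓝[>] 0) (𝓝 w) :=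
    (Continuous.tendsto' (by fun_prop) 0 w (by simp)).mono_left nhdsWithin_le_nhds
  obtain ⟨t, htW, ht0, ht1⟩ :=
    ((hpath.eventually (hW.mem_nhds hwW)).and (Ioo_mem_nhdsGT one_pos)).exists
  have hzF := convex_simplexFeasible e V (a u) hw hsF (sub_nonneg.2 ht1.le) ht0.le (by ring)
  have hzlt : ∀ j, a u j ⬝ᵥ ((1 - t) • w + t • s) < V j := fun j => by
    simp only [dotProduct_add, dotProduct_smul, smul_eq_mul]
    calc (1 - t) * a u j ⬝ᵥ w + t * a u j ⬝ᵥ s < (1 - t) * V j + t * V j :=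
          add_lt_add_of_le_of_lt (mul_le_mul_of_nonneg_left (hw.2.2.2 j) (sub_nonneg.2 ht1.le))
            (mul_lt_mul_of_pos_left (hsa j) ht0)
      _ = V j := by ring
  filter_upwards [eventually_mem_simplexFeasible e V ha ⟨hzF.1, hzF.2.1⟩ hzF.2.2.1 hzlt]
    with u' hu'
  exact ⟨_, hu', htW⟩

end SimplexLP

theorem lp_argmin_usc_of_slater_general
    (K : Type*) [Fintype K]
    (U : Type*) [MetricSpace U]
    (ιE : Type*) (e : ιE → K → ℝ)
    (B : ℕ)
    (c₀ : U → K → ℝ) (c : Fin B → U → K → ℝ) (V : Fin B → ℝ)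
    (hc₀ : Continuous fun u => c₀ u)
    (hc : ∀ j, Continuous fun u => c j u)
    (η : ℝ) (hη : 0 < η)
    (hslater : ∀ u : U, ∃ z : K → ℝ,
        (∀ k, 0 ≤ z k) ∧ (∑ k, z k = 1) ∧ (∀ j, ∑ k, e j k * z k = 0) ∧
        ∀ j : Fin B, ∑ k, c j u k * z k ≤ V j - η)
    (Feas : U → Set (K → ℝ))
    (hFeas : ∀ u, Feas u = {z : K → ℝ | (∀ k, 0 ≤ z k) ∧ (∑ k, z k = 1) ∧
        (∀ j, ∑ k, e j k * z k = 0) ∧ ∀ j : Fin B, ∑ k, c j u k * z k ≤ V j})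
    (Γ : U → Set (K → ℝ))
    (hΓ : ∀ u, Γ u = {z ∈ Feas u |
        ∀ w ∈ Feas u, ∑ k, c₀ u k * z k ≤ ∑ k, c₀ u k * w k}) :
    (∀ u, (Γ u).Nonempty ∧ IsCompact (Γ u) ∧ Convex ℝ (Γ u)) ∧
    (∀ u : U, ∀ O : Set (K → ℝ), IsOpen O → Γ u ⊆ O →
        ∀ᶠ u' in nhds u, Γ u' ⊆ O) := by
  have hFeas' : Feas = fun u => simplexFeasible e (fun j => c j u) V := funext hFeas
  have hΓ' : Γ = fun u => minimizers (Feas u) (c₀ u ⬝ᵥ ·) := funext hΓ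
  subst hFeas' hΓ'
  have ha : Continuous fun u j => c j u := continuous_pi hc
  have hgraph := isClosed_graph_simplexFeasible e V ha
  have hstrict : ∀ u, ∃ s ∈ stdSimplex ℝ K, (∀ i, e i ⬝ᵥ s = 0) ∧ ∀ j, c j u ⬝ᵥ s < V j :=
    fun u => by
      obtain ⟨s, hs0, hs1, hse, hsc⟩ := hslater u
      exact ⟨s, ⟨hs0, hs1⟩, hse, fun j => (hsc j).trans_lt (by linarith)⟩
  have hcompact (u : U) : IsCompact (simplexFeasible e (fun j => c j u) V) :=
    (isCompact_stdSimplex ℝ K).of_isClosed_subset (hgraph.preimage (Continuous.prodMk_right u))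
      (simplexFeasible_subset_stdSimplex e V _)
  have hnonempty (u : U) : (simplexFeasible e (fun j => c j u) V).Nonempty :=
    let ⟨s, hs, hse, hsc⟩ := hstrict u
    ⟨s, hs.1, hs.2, hse, fun j => (hsc j).le⟩
  refine ⟨fun u => ⟨?_, ?_, ?_⟩, (upperHemicontinuous_minimizers (isCompact_stdSimplex ℝ K)
    (fun u => simplexFeasible_subset_stdSimplex e V _)
    ((hc₀.comp continuous_fst).dotProduct continuous_snd) hgraph
    (lowerHemicontinuous_simplexFeasible e V ha hstrict)).forall_isOpen⟩
  · exact (hcompact u).nonempty_minimizers (hnonempty u)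
      (continuous_const.dotProduct continuous_id).continuousOn
  · exact (hcompact u).isCompact_minimizers (continuous_const.dotProduct continuous_id)
  · exact ((dotProductBilin ℝ ℝ (c₀ u)).convexOn (convex_simplexFeasible e V _)).convex_minimizers

/-- Strict feasibility (strong Slater condition) implies upper
semicontinuity, with nonempty compact convex values, of the optimal-solution
set of a parameterized linear program on the simplex. -/
theorem lp_argmin_usc_of_slater
    (K : Type*) [Fintype K]
    (U : Type*) [MetricSpace U] [CompactSpace U]
    (ιE : Type*) [Fintype ιE] (e : ιE → K → ℝ)
    (B : ℕ)
    (c₀ : U → K → ℝ) (c : Fin B → U → K → ℝ) (V : Fin B → ℝ)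
    (hc₀ : Continuous fun u => c₀ u)
    (hc : ∀ j, Continuous fun u => c j u)
    (η : ℝ) (hη : 0 < η)
    (hslater : ∀ u : U, ∃ z : K → ℝ,
        (∀ k, 0 ≤ z k) ∧ (∑ k, z k = 1) ∧ (∀ j, ∑ k, e j k * z k = 0) ∧
        ∀ j : Fin B, ∑ k, c j u k * z k ≤ V j - η)
    (Feas : U → Set (K → ℝ))
    (hFeas : ∀ u, Feas u = {z : K → ℝ | (∀ k, 0 ≤ z k) ∧ (∑ k, z k = 1) ∧
        (∀ j, ∑ k, e j k * z k = 0) ∧ ∀ j : Fin B, ∑ k, c j u k * z k ≤ V j})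
    (Γ : U → Set (K → ℝ))
    (hΓ : ∀ u, Γ u = {z ∈ Feas u |
        ∀ w ∈ Feas u, ∑ k, c₀ u k * z k ≤ ∑ k, c₀ u k * w k}) :
    (∀ u, (Γ u).Nonempty ∧ IsCompact (Γ u) ∧ Convex ℝ (Γ u)) ∧
    (∀ u : U, ∀ O : Set (K → ℝ), IsOpen O → Γ u ⊆ O →
        ∀ᶠ u' in nhds u, Γ u' ⊆ O) :=
  lp_argmin_usc_of_slater_general K U ιE e B c₀ c V hc₀ hc η hη hslater Feas hFeas Γ hΓ
end

section
/- Without a Slater condition, upper semicontinuity can fail: there exist a finite set K, continuous cost maps c₀, c₁ : [0,1] → ℝ^K, and a bound V₁ ∈ ℝ such that the feasible set {z ∈ Δ(K) : ⟨c₁(t), z⟩ ≤ V₁} is nonempty for all t ∈ [0,1], but the minimizer set map t ↦ argmin{⟨c₀(t), z⟩ : z ∈ Δ(K), ⟨c₁(t), z⟩ ≤ V₁} is not upper semicontinuous at some point. -/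
/-- Without a Slater condition, upper semicontinuity of the
minimizer set map of a parameterized LP on the simplex can fail: there are a
finite set `K = Fin n`, continuous cost maps `c₀ c₁ : [0,1] → ℝ^K` and a bound
`V₁` such that the feasible set is nonempty for each `t ∈ [0,1]` but the
argmin map is not upper semicontinuous at some point of `[0,1]`. -/
theorem usc_failure_without_slater :
    ∃ (n : ℕ) (c₀ c₁ : ℝ → (Fin n → ℝ)) (V₁ : ℝ),
      ContinuousOn c₀ (Set.Icc 0 1) ∧ ContinuousOn c₁ (Set.Icc 0 1) ∧
      (∀ t ∈ Set.Icc (0:ℝ) 1,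
        {z : Fin n → ℝ | (∀ k, 0 ≤ z k) ∧ (∑ k, z k = 1) ∧
          ∑ k, c₁ t k * z k ≤ V₁}.Nonempty) ∧
      ∃ t₀ ∈ Set.Icc (0:ℝ) 1, ∃ O : Set (Fin n → ℝ), IsOpen O ∧
        {z : Fin n → ℝ | ((∀ k, 0 ≤ z k) ∧ (∑ k, z k = 1) ∧
              ∑ k, c₁ t₀ k * z k ≤ V₁) ∧
            ∀ w : Fin n → ℝ, ((∀ k, 0 ≤ w k) ∧ (∑ k, w k = 1) ∧
              ∑ k, c₁ t₀ k * w k ≤ V₁) →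
              ∑ k, c₀ t₀ k * z k ≤ ∑ k, c₀ t₀ k * w k} ⊆ O ∧
        ¬ ∀ᶠ t in nhdsWithin t₀ (Set.Icc 0 1),
            {z : Fin n → ℝ | ((∀ k, 0 ≤ z k) ∧ (∑ k, z k = 1) ∧
                ∑ k, c₁ t k * z k ≤ V₁) ∧
              ∀ w : Fin n → ℝ, ((∀ k, 0 ≤ w k) ∧ (∑ k, w k = 1) ∧
                ∑ k, c₁ t k * w k ≤ V₁) →
                ∑ k, c₀ t k * z k ≤ ∑ k, c₀ t k * w k} ⊆ O := by
  refine ⟨2, fun _ => ![0, 1], fun t => ![t, 0], 0, ?_, ?_, ?_, 0, ?_, ?_⟩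
  · exact continuousOn_const
  · apply Continuous.continuousOn
    apply continuous_pi
    intro k
    fin_cases k
    · exact continuous_id
    · exact continuous_const
  · intro t _
    refine ⟨![0, 1], fun k => by fin_cases k <;> norm_num, by simp [Fin.sum_univ_two], ?_⟩
    simp [Fin.sum_univ_two]
  · exact ⟨le_refl 0, by norm_num⟩
  · refine ⟨{z | z 1 < 1/2}, ?_, ?_, ?_⟩
    · exact isOpen_lt (continuous_apply 1) continuous_const
    · -- argmin at t₀ = 0 is {(1,0)} ⊆ O
      rintro z ⟨⟨hz0, hz1, _⟩, hmin⟩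
      have hw : ((∀ k, 0 ≤ (![1, 0] : Fin 2 → ℝ) k) ∧ (∑ k, (![1, 0] : Fin 2 → ℝ) k = 1) ∧
          ∑ k, (![(0:ℝ), 0] : Fin 2 → ℝ) k * (![1, 0] : Fin 2 → ℝ) k ≤ 0) := by
        refine ⟨fun k => by fin_cases k <;> norm_num, by simp [Fin.sum_univ_two], ?_⟩
        simp [Fin.sum_univ_two]
      have := hmin ![1, 0] hw
      simp [Fin.sum_univ_two] at this
      have h0 := hz0 1
      simp only [Set.mem_setOf_eq]
      linarith
    · -- not eventually: along tₙ = 1/(n+1) → 0, (0,1) is a minimizer but ∉ O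
      intro h
      have htend : Filter.Tendsto (fun n : ℕ => (1 : ℝ) / (n + 1)) Filter.atTop
          (nhdsWithin 0 (Set.Icc 0 1)) := by
        apply tendsto_nhdsWithin_of_tendsto_nhds_of_eventually_within
        · exact tendsto_one_div_add_atTop_nhds_zero_nat
        · filter_upwards [Filter.eventually_ge_atTop 0] with n _
          constructor
          · positivity
          · rw [div_le_one (by positivity)]
            linarith [Nat.cast_nonneg (α := ℝ) n]
      have := (htend.eventually h).exists
      obtain ⟨n, hn⟩ := this
      set t : ℝ := 1 / (n + 1) with ht
      have htpos : 0 < t := by positivity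
      have hzmem : (![0, 1] : Fin 2 → ℝ) ∈ {z : Fin 2 → ℝ | ((∀ k, 0 ≤ z k) ∧ (∑ k, z k = 1) ∧
            ∑ k, (![t, 0] : Fin 2 → ℝ) k * z k ≤ 0) ∧
          ∀ w : Fin 2 → ℝ, ((∀ k, 0 ≤ w k) ∧ (∑ k, w k = 1) ∧
            ∑ k, (![t, 0] : Fin 2 → ℝ) k * w k ≤ 0) →
            ∑ k, (![(0:ℝ), 1] : Fin 2 → ℝ) k * (![0, 1] : Fin 2 → ℝ) k ≤
              ∑ k, (![(0:ℝ), 1] : Fin 2 → ℝ) k * w k} := by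
        constructor
        · refine ⟨fun k => by fin_cases k <;> norm_num, by simp [Fin.sum_univ_two], ?_⟩
          simp [Fin.sum_univ_two]
        · rintro w ⟨hw0, hw1, hwc⟩
          simp only [Fin.sum_univ_two, Matrix.cons_val_zero, Matrix.cons_val_one, Matrix.head_cons] at hw1 hwc ⊢
          have hw00 : w 0 = 0 := by nlinarith [hw0 0, hw0 1, htpos]
          norm_num
          nlinarith
      have := hn hzmem
      simp at this
      linarith
end

section
/- In a single-controller constrained average-cost MDP with finite states and actions, single ergodic class under every stationary policy, and a strictly feasible stationary policy (Slater point: a stationary v with occupation-measure costs ⟨c_j, f(v)⟩ ≤ V_j − η for all j and some η > 0), the constrained linear program — minimize ⟨c₀, z⟩ over z ∈ Δ(K) satisfying the balance equations and ⟨c_j, z⟩ ≤ V_j — has an optimal solution z*, and any stationary policy obtained by normalizing z* achieves average cost ⟨c₀, z*⟩ and satisfies all constraints. -/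
/-!
The feasible set of the LP is a closed subset of the probability simplex on state-action pairs,
hence compact, and it contains the occupation measure of the Slater policy, so the linear
objective attains its minimum on it. If `w` normalizes a feasible `z`, then `z` is the
occupation measure of `w` against the state marginal of `z`; for such measures the balance
equations say exactly that the marginal is a stationary distribution of `w`. By uniqueness the
marginal is `π w`, so `f w = z` and the costs of `w` are those of `z`.
-/

open Finset

namespace MDP

variable {X : Type*} {A : X → Type*} [∀ x, Fintype (A x)]

def marginal (z : (Σ x, A x) → ℝ) (y : X) : ℝ := ∑ a, z ⟨y, a⟩

def occupation (μ : X → ℝ) (w : ∀ x, A x → ℝ) (k : Σ x, A x) : ℝ := μ k.1 * w k.1 k.2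

theorem marginal_nonneg {z : (Σ x, A x) → ℝ} (hz : ∀ k, 0 ≤ z k) (y : X) : 0 ≤ marginal z y :=
  sum_nonneg fun a _ => hz ⟨y, a⟩

theorem marginal_occupation {w : ∀ x, A x → ℝ} (hw : ∀ x, ∑ a, w x a = 1) (μ : X → ℝ) :
    marginal (occupation μ w) = μ := by
  ext y
  simp [marginal, occupation, ← mul_sum, hw]

theorem occupation_marginal_of_normalizes {z : (Σ x, A x) → ℝ} (hz : ∀ k, 0 ≤ z k)
    {w : ∀ x, A x → ℝ} (hw : ∀ y, 0 < marginal z y → ∀ a, w y a = z ⟨y, a⟩ / marginal z y) :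
    occupation (marginal z) w = z := by
  ext ⟨y, a⟩
  rcases (marginal_nonneg hz y).eq_or_lt with h | h
  · -- `w y` is arbitrary here, but `z` vanishes on the whole fibre over `y`.
    have hza : z ⟨y, a⟩ = 0 :=
      (sum_eq_zero_iff_of_nonneg fun b _ => hz ⟨y, b⟩).1 h.symm a (mem_univ a)
    simp [occupation, ← h, hza]
  · simp [occupation, hw y h a, mul_div_cancel₀ _ h.ne']

variable [Fintype X]

def IsStationaryDist (P : (Σ x, A x) → X → ℝ) (w : ∀ x, A x → ℝ) (μ : X → ℝ) : Prop :=
  (∀ y, 0 ≤ μ y) ∧ ∑ y, μ y = 1 ∧ ∀ r, ∑ y, μ y * ∑ a, w y a * P ⟨y, a⟩ r = μ r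

theorem sum_marginal (z : (Σ x, A x) → ℝ) : ∑ y, marginal z y = ∑ k, z k :=
  (Fintype.sum_sigma z).symm

theorem sum_occupation_mul (μ : X → ℝ) (w : ∀ x, A x → ℝ) (g : (Σ x, A x) → ℝ) :
    ∑ k, occupation μ w k * g k = ∑ y, μ y * ∑ a, w y a * g ⟨y, a⟩ := by
  simp only [Fintype.sum_sigma, occupation, mul_sum, mul_assoc]

variable [DecidableEq X]

def IsBalanced (P : (Σ x, A x) → X → ℝ) (z : (Σ x, A x) → ℝ) : Prop :=
  ∀ r, ∑ k, z k * ((if k.1 = r then (1 : ℝ) else 0) - P k r) = 0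

theorem isBalanced_iff {P : (Σ x, A x) → X → ℝ} {z : (Σ x, A x) → ℝ} :
    IsBalanced P z ↔ ∀ r, ∑ k, z k * P k r = marginal z r := by
  have hout : ∀ r, ∑ k, z k * (if k.1 = r then (1 : ℝ) else 0) = marginal z r := by
    intro r
    rw [Fintype.sum_sigma, Fintype.sum_eq_single r fun x hx => by simp [hx]]
    simp [marginal]
  simp only [IsBalanced, mul_sub, sum_sub_distrib, hout, sub_eq_zero]
  exact forall_congr' fun r => eq_comm

theorem isBalanced_occupation_iff {P : (Σ x, A x) → X → ℝ} {w : ∀ x, A x → ℝ}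
    (hw : ∀ x, ∑ a, w x a = 1) (μ : X → ℝ) :
    IsBalanced P (occupation μ w) ↔ ∀ r, ∑ y, μ y * ∑ a, w y a * P ⟨y, a⟩ r = μ r := by
  simp only [isBalanced_iff, sum_occupation_mul _ _ (P · _), marginal_occupation hw]

def lpFeasibleSet (P : (Σ x, A x) → X → ℝ) {B : ℕ} (c : Fin (B + 1) → (Σ x, A x) → ℝ)
    (V : Fin B → ℝ) : Set ((Σ x, A x) → ℝ) :=
  {z | (∀ k, 0 ≤ z k) ∧ (∑ k, z k = 1) ∧ IsBalanced P z ∧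
    ∀ j : Fin B, ∑ k, c j.succ k * z k ≤ V j}

theorem isCompact_lpFeasibleSet (P : (Σ x, A x) → X → ℝ) {B : ℕ}
    (c : Fin (B + 1) → (Σ x, A x) → ℝ) (V : Fin B → ℝ) : IsCompact (lpFeasibleSet P c V) := by
  refine (isCompact_stdSimplex ℝ _).of_isClosed_subset ?_ fun z hz => ⟨hz.1, hz.2.1⟩
  simp only [lpFeasibleSet, IsBalanced, Set.ofPred_and, Set.ofPred_forall]
  refine .inter (isClosed_iInter fun k => isClosed_le (by fun_prop) (by fun_prop))
    (.inter (isClosed_eq (by fun_prop) (by fun_prop))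
    (.inter (isClosed_iInter fun r => isClosed_eq (by fun_prop) (by fun_prop))
      (isClosed_iInter fun j => isClosed_le (by fun_prop) (by fun_prop))))

theorem occupation_mem_lpFeasibleSet {P : (Σ x, A x) → X → ℝ} {B : ℕ}
    {c : Fin (B + 1) → (Σ x, A x) → ℝ} {V : Fin B → ℝ} {w : ∀ x, A x → ℝ}
    (hw0 : ∀ x a, 0 ≤ w x a) (hw1 : ∀ x, ∑ a, w x a = 1) {μ : X → ℝ}
    (hμ : IsStationaryDist P w μ) (hc : ∀ j : Fin B, ∑ k, c j.succ k * occupation μ w k ≤ V j) :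
    occupation μ w ∈ lpFeasibleSet P c V := by
  obtain ⟨hμ0, hμ1, hμ_inv⟩ := hμ
  refine ⟨fun k => mul_nonneg (hμ0 _) (hw0 _ _), ?_,
    (isBalanced_occupation_iff hw1 μ).2 hμ_inv, hc⟩
  rw [← sum_marginal, marginal_occupation hw1, hμ1]

theorem occupation_eq_of_normalizes {P : (Σ x, A x) → X → ℝ} {z : (Σ x, A x) → ℝ}
    (hz0 : ∀ k, 0 ≤ z k) (hz1 : ∑ k, z k = 1) (hz : IsBalanced P z)
    {w : ∀ x, A x → ℝ} (hw : ∀ x, ∑ a, w x a = 1) {μ : X → ℝ}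
    (huniq : ∀ μ', IsStationaryDist P w μ' → μ' = μ)
    (hnorm : ∀ y, 0 < marginal z y → ∀ a, w y a = z ⟨y, a⟩ / marginal z y) :
    occupation μ w = z := by
  have hocc := occupation_marginal_of_normalizes hz0 hnorm
  have hinv := (isBalanced_occupation_iff hw (marginal z)).1 (hocc ▸ hz)
  rw [← huniq _ ⟨marginal_nonneg hz0, (sum_marginal z).trans hz1, hinv⟩, hocc]

end MDP

theorem constrained_lp_optimal_and_normalized_policy_general
    (X : Type*) [Fintype X] [DecidableEq X]
    (A : X → Type*) [∀ x, Fintype (A x)]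
    (P : (Σ x : X, A x) → X → ℝ)
    (Pol : Set (∀ x : X, A x → ℝ))
    (hPol : Pol = {u | (∀ x a, 0 ≤ u x a) ∧ ∀ x, ∑ a, u x a = 1})
    (π : (∀ x : X, A x → ℝ) → (X → ℝ))
    (hπ : ∀ w ∈ Pol, ((∀ y, 0 ≤ π w y) ∧ (∑ y, π w y = 1) ∧
        ∀ r, ∑ y, π w y * ∑ a, w y a * P ⟨y, a⟩ r = π w r) ∧
      ∀ π' : X → ℝ, ((∀ y, 0 ≤ π' y) ∧ (∑ y, π' y = 1) ∧
        ∀ r, ∑ y, π' y * ∑ a, w y a * P ⟨y, a⟩ r = π' r) → π' = π w)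
    (f : (∀ x : X, A x → ℝ) → ((Σ x : X, A x) → ℝ))
    (hf : ∀ w k, f w k = π w k.1 * w k.1 k.2)
    (B : ℕ) (c : Fin (B + 1) → (Σ x : X, A x) → ℝ) (V : Fin B → ℝ)
    (Feas : Set ((Σ x : X, A x) → ℝ))
    (hFeas : Feas = {z | (∀ k, 0 ≤ z k) ∧ (∑ k, z k = 1) ∧
        (∀ r : X, ∑ k : Σ x : X, A x,
          z k * ((if k.1 = r then (1 : ℝ) else 0) - P k r) = 0) ∧
        ∀ j : Fin B, ∑ k, c j.succ k * z k ≤ V j})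
    (η : ℝ) (hη : 0 < η)
    (hslater : ∃ v ∈ Pol, ∀ j : Fin B, ∑ k, c j.succ k * f v k ≤ V j - η) :
    ∃ z_star ∈ Feas,
      (∀ z ∈ Feas, ∑ k, c 0 k * z_star k ≤ ∑ k, c 0 k * z k) ∧
      ∀ w ∈ Pol,
        (∀ y : X, 0 < ∑ b, z_star ⟨y, b⟩ →
          ∀ a : A y, w y a = z_star ⟨y, a⟩ / ∑ b, z_star ⟨y, b⟩) →
        (∑ k, c 0 k * f w k = ∑ k, c 0 k * z_star k) ∧
        ∀ j : Fin B, ∑ k, c j.succ k * f w k ≤ V j := by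
  have hf_occ : ∀ w, f w = MDP.occupation (π w) w := fun w => funext (hf w)
  change Feas = MDP.lpFeasibleSet P c V at hFeas
  subst hPol hFeas
  obtain ⟨v, hv, hv_slater⟩ := hslater
  have hfv : f v ∈ MDP.lpFeasibleSet P c V := by
    rw [hf_occ] at hv_slater ⊢
    exact MDP.occupation_mem_lpFeasibleSet hv.1 hv.2 (hπ v hv).1
      fun j => (hv_slater j).trans (by linarith)
  obtain ⟨z, hz, hz_min⟩ :=
    (MDP.isCompact_lpFeasibleSet P c V).exists_isMinOn (f := fun z => ∑ k, c 0 k * z k) ⟨f v, hfv⟩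
      (by fun_prop)
  refine ⟨z, hz, fun z' hz' => hz_min hz', fun w hw hnorm => ?_⟩
  have hfw : f w = z := by
    rw [hf_occ]
    exact MDP.occupation_eq_of_normalizes hz.1 hz.2.1 hz.2.2.1 hw.2 (hπ w hw).2 hnorm
  rw [hfw]
  exact ⟨rfl, hz.2.2.2⟩

/-- In a single-controller constrained average-cost MDP with
finite states and actions, a single ergodic class under every stationary
policy (so every stationary policy `w` has a unique invariant distribution
`π w`, and its average `c_j`-cost equals `⟨c_j, f w⟩` with
`f w (y,a) = π w y * w (a|y)`), and a strictly feasible stationary policy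
(Slater point), the constrained LP has an optimal solution `z*`, and any
stationary policy obtained by normalizing `z*` has average cost `⟨c₀, z*⟩`
and satisfies all the constraints. -/
theorem constrained_lp_optimal_and_normalized_policy
    (X : Type*) [Fintype X] [DecidableEq X]
    (A : X → Type*) [∀ x, Fintype (A x)] [∀ x, Nonempty (A x)]
    (P : (Σ x : X, A x) → X → ℝ)
    (hP0 : ∀ k r, 0 ≤ P k r) (hP1 : ∀ k, ∑ r : X, P k r = 1)
    (Pol : Set (∀ x : X, A x → ℝ))
    (hPol : Pol = {u | (∀ x a, 0 ≤ u x a) ∧ ∀ x, ∑ a, u x a = 1})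
    (π : (∀ x : X, A x → ℝ) → (X → ℝ))
    (hπ : ∀ w ∈ Pol, ((∀ y, 0 ≤ π w y) ∧ (∑ y, π w y = 1) ∧
        ∀ r, ∑ y, π w y * ∑ a, w y a * P ⟨y, a⟩ r = π w r) ∧
      ∀ π' : X → ℝ, ((∀ y, 0 ≤ π' y) ∧ (∑ y, π' y = 1) ∧
        ∀ r, ∑ y, π' y * ∑ a, w y a * P ⟨y, a⟩ r = π' r) → π' = π w)
    (f : (∀ x : X, A x → ℝ) → ((Σ x : X, A x) → ℝ))
    (hf : ∀ w k, f w k = π w k.1 * w k.1 k.2)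
    (B : ℕ) (c : Fin (B + 1) → (Σ x : X, A x) → ℝ) (V : Fin B → ℝ)
    (Feas : Set ((Σ x : X, A x) → ℝ))
    (hFeas : Feas = {z | (∀ k, 0 ≤ z k) ∧ (∑ k, z k = 1) ∧
        (∀ r : X, ∑ k : Σ x : X, A x,
          z k * ((if k.1 = r then (1 : ℝ) else 0) - P k r) = 0) ∧
        ∀ j : Fin B, ∑ k, c j.succ k * z k ≤ V j})
    (η : ℝ) (hη : 0 < η)
    (hslater : ∃ v ∈ Pol, ∀ j : Fin B, ∑ k, c j.succ k * f v k ≤ V j - η) :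
    ∃ z_star ∈ Feas,
      (∀ z ∈ Feas, ∑ k, c 0 k * z_star k ≤ ∑ k, c 0 k * z k) ∧
      ∀ w ∈ Pol,
        (∀ y : X, 0 < ∑ b, z_star ⟨y, b⟩ →
          ∀ a : A y, w y a = z_star ⟨y, a⟩ / ∑ b, z_star ⟨y, b⟩) →
        (∑ k, c 0 k * f w k = ∑ k, c 0 k * z_star k) ∧
        ∀ j : Fin B, ∑ k, c j.succ k * f w k ≤ V j :=
  constrained_lp_optimal_and_normalized_policy_general X A P Pol hPol π hπ f hf B c V Feas hFeas η
    hη hslater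
end
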